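/- arXiv:2003.13227 — 2 statements merged into one kernel-verified Lean document; each statement's English description precedes it below -/
import Mathlib

section
/- Let X be a metrizable topological space, r ∈ (0,∞), and d, e ∈ Met(X) with D_X(d, e) ≤ r. Let X₀ = X, let X₁ be a set disjoint from X₀ with card(X₁) = card(X₀), and let τ : X₀ → X₁ be a bijection; give X₁ the topology transported from X by τ. Then there exists a metric h ∈ Met(X₀ ⊔ X₁) on the topological disjoint union X₀ ⊔ X₁ such that (1) h restricted to X₀ × X₀ equals d, (2) h restricted to X₁ × X₁ equals the pushforward metric (τ⁻¹)*e defined by ((τ⁻¹)*e)(u,v) = e(τ⁻¹(u), τ⁻¹(v)), and (3) h(x, τ(x)) = r/2 for every x ∈ X₀. -/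
/-!
Put `d` on `X` and the pushforward of `e` on `X₁`, and let a point `x` and a point `τ w` be at
distance `r / 2 + ⨅ z, (d x z + e z w)`. The triangle inequalities through the other copy need
exactly `|d - e| ≤ r = 2 * (r / 2)`. This is Mathlib's `Metric.glueMetricApprox` for
`id : X → X` and `τ : X → X₁`; its uniformity is that of the sum, so it induces the sum topology.
-/

open scoped ENNReal

/-- The distance function of a bundled metric-space structure. -/
noncomputable def mdist {X : Type*} (m : MetricSpace X) (x y : X) : ℝ :=
  m.toDist.dist x y

/-- `Met(X)`: the set of metrics (bundled metric-space structures) on `X` that induce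
the given topology of `X`. -/
def MetricsOn (X : Type*) [t : TopologicalSpace X] : Set (MetricSpace X) :=
  { m | m.toUniformSpace.toTopologicalSpace = t }

/-- The extended sup-metric `D_X` on metrics on `X`. -/
noncomputable def metD {X : Type*} (d e : MetricSpace X) : ℝ≥0∞ :=
  ⨆ p : X × X, ENNReal.ofReal |mdist d p.1 p.2 - mdist e p.1 p.2|

theorem abs_mdist_sub_le_of_metD_le {X : Type*} {d e : MetricSpace X} {r : ℝ} (hr : 0 ≤ r)
    (hde : metD d e ≤ ENNReal.ofReal r) (x y : X) : |mdist d x y - mdist e x y| ≤ r :=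
  (ENNReal.ofReal_le_ofReal_iff hr).1 <|
    (le_iSup (fun p : X × X => ENNReal.ofReal |mdist d p.1 p.2 - mdist e p.1 p.2|) (x, y)).trans hde

theorem MetricSpace.induced_mem_metricsOn {X Y : Type*} [TopologicalSpace X] [TopologicalSpace Y]
    {f : Y → X} (hf : Topology.IsEmbedding f) {e : MetricSpace X} (he : e ∈ MetricsOn X) :
    MetricSpace.induced f hf.injective e ∈ MetricsOn Y := by
  change (UniformSpace.comap f e.toUniformSpace).toTopologicalSpace = _
  rw [UniformSpace.toTopologicalSpace_comap, show e.toUniformSpace.toTopologicalSpace = _ from he]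
  exact hf.eq_induced.symm

theorem mem_metricsOn_sum {X Y : Type*} [TopologicalSpace X] [TopologicalSpace Y]
    {m : MetricSpace X} {n : MetricSpace Y} (hm : m ∈ MetricsOn X) (hn : n ∈ MetricsOn Y)
    (h : MetricSpace (X ⊕ Y))
    (hh : h.toUniformSpace = @Sum.instUniformSpace X Y m.toUniformSpace n.toUniformSpace) :
    h ∈ MetricsOn (X ⊕ Y) := by
  change h.toUniformSpace.toTopologicalSpace = _
  rw [hh]
  change @instTopologicalSpaceSum X Y m.toUniformSpace.toTopologicalSpace
    n.toUniformSpace.toTopologicalSpace = _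
  rw [show m.toUniformSpace.toTopologicalSpace = _ from hm,
    show n.toUniformSpace.toTopologicalSpace = _ from hn]

theorem exists_mem_metricsOn_sum_glue {X Y Z : Type*} [TopologicalSpace X] [TopologicalSpace Y]
    {m : MetricSpace X} {n : MetricSpace Y} (hm : m ∈ MetricsOn X) (hn : n ∈ MetricsOn Y)
    (Φ : Z → X) (Ψ : Z → Y) {ε : ℝ} (hε : 0 < ε)
    (H : ∀ p q, |mdist m (Φ p) (Φ q) - mdist n (Ψ p) (Ψ q)| ≤ 2 * ε) :
    ∃ h ∈ MetricsOn (X ⊕ Y),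
      (∀ x y : X, mdist h (.inl x) (.inl y) = mdist m x y) ∧
      (∀ x y : Y, mdist h (.inr x) (.inr y) = mdist n x y) ∧
      (∀ p : Z, mdist h (.inl (Φ p)) (.inr (Ψ p)) = ε) := by
  rcases isEmpty_or_nonempty Z with hZ | hZ
  · exact ⟨@Metric.metricSpaceSum X Y m n, mem_metricsOn_sum hm hn _ rfl,
      fun _ _ => rfl, fun _ _ => rfl, hZ.elim⟩
  · exact ⟨@Metric.glueMetricApprox X Y Z m n hZ Φ Ψ ε hε H, mem_metricsOn_sum hm hn _ rfl,
      fun _ _ => rfl, fun _ _ => rfl, @Metric.glueDist_glued_points X Y Z m n hZ Φ Ψ ε⟩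

theorem metric_amalgamation_of_two_copies_general {X : Type*} [TopologicalSpace X] (r : ℝ) (hr : 0 < r)
    (d e : MetricSpace X) (hd : d ∈ MetricsOn X) (he : e ∈ MetricsOn X)
    (hde : metD d e ≤ ENNReal.ofReal r)
    (X₁ : Type*) [TopologicalSpace X₁] (τ : X ≃ₜ X₁) :
    ∃ h ∈ MetricsOn (X ⊕ X₁),
      (∀ x y : X, mdist h (Sum.inl x) (Sum.inl y) = mdist d x y) ∧
      (∀ u v : X₁, mdist h (Sum.inr u) (Sum.inr v) = mdist e (τ.symm u) (τ.symm v)) ∧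
      (∀ x : X, mdist h (Sum.inl x) (Sum.inr (τ x)) = r / 2) := by
  let e₁ : MetricSpace X₁ := .induced τ.symm τ.symm.injective e
  have he₁ : ∀ p q, mdist e₁ (τ p) (τ q) = mdist e p q := fun p q =>
    congrArg₂ (mdist e) (τ.symm_apply_apply p) (τ.symm_apply_apply q)
  refine exists_mem_metricsOn_sum_glue hd (MetricSpace.induced_mem_metricsOn
    τ.symm.isEmbedding he) id τ (half_pos hr) fun p q => ?_
  rw [he₁, mul_div_cancel₀ r two_ne_zero]
  exact abs_mdist_sub_le_of_metD_le hr.le hde p q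

/-- A copy `X₁` of `X` is realized as a type equipped with the topology transported by a
homeomorphism `τ : X ≃ₜ X₁`; the disjoint union `X₀ ⊔ X₁` is the sum type `X ⊕ X₁` with the
direct sum topology.  The pushforward metric `(τ⁻¹)*e` is `(u, v) ↦ e(τ⁻¹ u, τ⁻¹ v)`. -/
theorem metric_amalgamation_of_two_copies {X : Type*} [TopologicalSpace X]
    [TopologicalSpace.MetrizableSpace X] (r : ℝ) (hr : 0 < r)
    (d e : MetricSpace X) (hd : d ∈ MetricsOn X) (he : e ∈ MetricsOn X)
    (hde : metD d e ≤ ENNReal.ofReal r)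
    (X₁ : Type*) [TopologicalSpace X₁] (τ : X ≃ₜ X₁) :
    ∃ h ∈ MetricsOn (X ⊕ X₁),
      (∀ x y : X, mdist h (Sum.inl x) (Sum.inl y) = mdist d x y) ∧
      (∀ u v : X₁, mdist h (Sum.inr u) (Sum.inr v) = mdist e (τ.symm u) (τ.symm v)) ∧
      (∀ x : X, mdist h (Sum.inl x) (Sum.inr (τ x)) = r / 2) :=
  metric_amalgamation_of_two_copies_general r hr d e hd he hde X₁ τ
end

section
/- Let X be a non-discrete metrizable topological space. Then the set of all d ∈ Met(X) such that the metric space (X, d) is not doubling is a dense G_δ subset of Met(X). -/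
open scoped ENNReal

/-- The space `Met(X)` of metrics on `X` compatible with its topology. -/
def Met (X : Type*) [TopologicalSpace X] : Type _ :=
  { m : MetricSpace X // m ∈ MetricsOn X }

/-- The topology on `Met(X)` generated by the extended metric `D_X`, i.e. generated by the
open balls of `D_X`. -/
instance Met.topologicalSpace (X : Type*) [TopologicalSpace X] : TopologicalSpace (Met X) :=
  TopologicalSpace.generateFrom
    { U | ∃ (d : Met X) (ε : ℝ≥0∞), 0 < ε ∧ U = { e : Met X | metD d.1 e.1 < ε } }

/-- `δ_d(A)`: the diameter of `A` with respect to the metric `m`. -/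
noncomputable def setDiam {X : Type*} (m : MetricSpace X) (A : Set X) : ℝ :=
  @Metric.diam X m.toPseudoMetricSpace A

/-- `α_d(A) = inf { d(x,y) : x, y ∈ A, x ≠ y }`. -/
noncomputable def setSep {X : Type*} (m : MetricSpace X) (A : Set X) : ℝ :=
  sInf { r : ℝ | ∃ x ∈ A, ∃ y ∈ A, x ≠ y ∧ r = mdist m x y }

/-- A metric space is doubling if there are `C, α > 0` such that every finite subset `A`
with at least two points satisfies `card A ≤ C (δ(A)/α(A))^α`. -/
def IsDoublingMetric {X : Type*} (m : MetricSpace X) : Prop :=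
  ∃ C : ℝ, 0 < C ∧ ∃ α : ℝ, 0 < α ∧ ∀ A : Finset X, 2 ≤ A.card →
    (A.card : ℝ) ≤ C * (setDiam m ↑A / setSep m ↑A) ^ α

/-!
The set of non-doubling metrics is `⋂ n, Uₙ`, where `d ∈ Uₙ` if some finite `A` with at least
two points has `(n + 1) (δ_d(A) / α_d(A)) ^ (n + 1) < card A`. For fixed `A`, both `δ_d(A)` and
`α_d(A)` move by at most `D_X(d, e)`, so each `Uₙ` is open.

For density, fix `d` and a non-isolated point `p`, and pick `x k → p` with
`4 d(x (k + 1), p) < d(x k, p)`, so that the ball `B(x k, d(x k, p) / 2)` contains no other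
`x j`. Put a tent of height `hₖ` on each of these balls, with `hₖ → 0` and `hₖ` constant on
the blocks `[n², n² + n)`. If `F : X → ℓ^∞` collects the tents, then
`e(u, v) = max (d(u, v)) ‖F u - F v‖` is a compatible metric (as `F` is continuous) within
`sup hₖ` of `d`, and each block is an `e`-equilateral set of `n` points, which is impossible in
a doubling space.
-/

open Filter Topology
open scoped BoundedContinuousFunction

section

variable {X : Type*}

lemma edist_mdist_le_metD (d e : MetricSpace X) (u v : X) :
    edist (mdist d u v) (mdist e u v) ≤ metD d e := by
  rw [edist_dist, Real.dist_eq]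
  exact le_iSup (fun q : X × X => ENNReal.ofReal |mdist d q.1 q.2 - mdist e q.1 q.2|) (u, v)

lemma metD_le_ofReal {d e : MetricSpace X} {s : ℝ}
    (h : ∀ u v, |mdist d u v - mdist e u v| ≤ s) : metD d e ≤ ENNReal.ofReal s :=
  iSup_le fun q => ENNReal.ofReal_le_ofReal (h q.1 q.2)

lemma abs_mdist_sub_lt_of_metD_lt {d e : MetricSpace X} {s : ℝ}
    (h : metD d e < ENNReal.ofReal s) (u v : X) : |mdist d u v - mdist e u v| < s :=
  edist_lt_ofReal.1 ((edist_mdist_le_metD d e u v).trans_lt h)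

lemma metD_self (d : MetricSpace X) : metD d d = 0 :=
  nonpos_iff_eq_zero.1 <| by simpa using metD_le_ofReal (d := d) (s := 0) (by simp)

lemma metD_triangle (a b c : MetricSpace X) : metD a c ≤ metD a b + metD b c :=
  iSup_le fun q => by
    rw [← Real.dist_eq, ← edist_dist]
    exact (edist_triangle _ (mdist b q.1 q.2) _).trans
      (add_le_add (edist_mdist_le_metD a b _ _) (edist_mdist_le_metD b c _ _))

namespace Met

variable [TopologicalSpace X]

theorem isOpen_iff {U : Set (Met X)} :
    IsOpen U ↔ ∀ d ∈ U, ∃ ε > 0, {e : Met X | metD d.1 e.1 < ε} ⊆ U := by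
  refine ⟨fun hU => ?_, fun h => ?_⟩
  · induction hU with
    | basic W hW =>
      obtain ⟨d₀, ε₀, -, rfl⟩ := hW
      intro d hd
      refine ⟨ε₀ - metD d₀.1 d.1, tsub_pos_of_lt hd, fun e he => ?_⟩
      calc metD d₀.1 e.1 ≤ metD d₀.1 d.1 + metD d.1 e.1 := metD_triangle _ _ _
        _ < metD d₀.1 d.1 + (ε₀ - metD d₀.1 d.1) := ENNReal.add_lt_add_left hd.ne_top he
        _ = ε₀ := add_tsub_cancel_of_le hd.le
    | univ => exact fun _ _ => ⟨1, one_pos, Set.subset_univ _⟩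
    | inter V₁ V₂ _ _ ih₁ ih₂ =>
      intro d hd
      obtain ⟨ε₁, hε₁, h₁⟩ := ih₁ d hd.1
      obtain ⟨ε₂, hε₂, h₂⟩ := ih₂ d hd.2
      exact ⟨min ε₁ ε₂, lt_min hε₁ hε₂, fun e (he : metD d.1 e.1 < _) =>
        ⟨h₁ (he.trans_le (min_le_left _ _)), h₂ (he.trans_le (min_le_right _ _))⟩⟩
    | sUnion S _ ih =>
      rintro d ⟨V, hVS, hdV⟩
      obtain ⟨ε, hε, h⟩ := ih V hVS d hdV
      exact ⟨ε, hε, h.trans (Set.subset_sUnion_of_mem hVS)⟩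
  · choose! ε hε hsub using h
    have hU : U = ⋃ d ∈ U, {e : Met X | metD d.1 e.1 < ε d} :=
      subset_antisymm (fun d hd => Set.mem_biUnion hd (by simpa [metD_self] using hε d hd))
        (Set.iUnion₂_subset hsub)
    rw [hU]
    exact isOpen_biUnion fun d hd =>
      TopologicalSpace.isOpen_generateFrom_of_mem ⟨d, ε d, hε d hd, rfl⟩

theorem continuous_of_abs_sub_le {φ : Met X → ℝ}
    (h : ∀ (d e : Met X) (s : ℝ), 0 ≤ s →
      (∀ u v, |mdist d.1 u v - mdist e.1 u v| ≤ s) → |φ d - φ e| ≤ s) :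
    Continuous φ := by
  refine continuous_def.2 fun V hV => isOpen_iff.2 fun d hd => ?_
  obtain ⟨r, hr, hball⟩ := Metric.isOpen_iff.1 hV (φ d) hd
  refine ⟨ENNReal.ofReal (r / 2), by simpa using hr, fun e he => hball ?_⟩
  rw [Metric.mem_ball, Real.dist_eq, abs_sub_comm]
  exact (h d e (r / 2) (by positivity)
    fun u v => (abs_mdist_sub_lt_of_metD_lt he u v).le).trans_lt (by linarith)

end Met

def IsEquilateral (m : MetricSpace X) (A : Finset X) : Prop :=
  ∃ c, ∀ u ∈ A, ∀ v ∈ A, u ≠ v → mdist m u v = c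

section FiniteSets

variable (m : MetricSpace X) {A : Finset X}

lemma mdist_nonneg (u v : X) : 0 ≤ mdist m u v := by
  let _ := m; exact dist_nonneg

lemma mdist_le_setDiam {u v : X} (hu : u ∈ A) (hv : v ∈ A) : mdist m u v ≤ setDiam m A := by
  let _ := m; exact Metric.dist_le_diam_of_mem A.finite_toSet.isBounded hu hv

lemma setSep_le_mdist {u v : X} (hu : u ∈ A) (hv : v ∈ A) (huv : u ≠ v) :
    setSep m A ≤ mdist m u v :=
  csInf_le ⟨0, by rintro _ ⟨x, -, y, -, -, rfl⟩; exact mdist_nonneg m x y⟩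
    ⟨u, hu, v, hv, huv, rfl⟩

lemma le_setSep (hA : 1 < A.card) {c : ℝ}
    (h : ∀ u ∈ A, ∀ v ∈ A, u ≠ v → c ≤ mdist m u v) : c ≤ setSep m A := by
  obtain ⟨a, ha, b, hb, hab⟩ := Finset.one_lt_card.1 hA
  refine le_csInf ⟨_, a, ha, b, hb, hab, rfl⟩ ?_
  rintro _ ⟨u, hu, v, hv, huv, rfl⟩
  exact h u hu v hv huv

lemma setSep_pos (hA : 1 < A.card) : 0 < setSep m A := by
  obtain ⟨a, ha, b, hb, hab⟩ := Finset.one_lt_card.1 hA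
  obtain ⟨q, hq, hmin⟩ := A.offDiag.exists_min_image (fun q => mdist m q.1 q.2)
    ⟨(a, b), Finset.mem_offDiag.2 ⟨ha, hb, hab⟩⟩
  obtain ⟨-, -, hq⟩ := Finset.mem_offDiag.1 hq
  refine lt_of_lt_of_le ?_ (le_setSep m hA fun u hu v hv huv =>
    hmin (u, v) (Finset.mem_offDiag.2 ⟨hu, hv, huv⟩))
  let _ := m; exact dist_pos.2 hq

lemma setSep_le_setDiam (hA : 1 < A.card) : setSep m A ≤ setDiam m A := by
  obtain ⟨a, ha, b, hb, hab⟩ := Finset.one_lt_card.1 hA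
  exact (setSep_le_mdist m ha hb hab).trans (mdist_le_setDiam m ha hb)

lemma setDiam_eq_of_equilateral (hA : 1 < A.card) {c : ℝ}
    (hc : ∀ u ∈ A, ∀ v ∈ A, u ≠ v → mdist m u v = c) : setDiam m A = c := by
  obtain ⟨a, ha, b, hb, hab⟩ := Finset.one_lt_card.1 hA
  have hc₀ : 0 ≤ c := hc a ha b hb hab ▸ mdist_nonneg m a b
  refine le_antisymm ?_ (hc a ha b hb hab ▸ mdist_le_setDiam m ha hb)
  let _ := m
  refine Metric.diam_le_of_forall_dist_le hc₀ fun u hu v hv => ?_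
  rcases eq_or_ne u v with rfl | huv
  · simpa using hc₀
  · exact (hc u hu v hv huv).le

lemma setSep_eq_of_equilateral (hA : 1 < A.card) {c : ℝ}
    (hc : ∀ u ∈ A, ∀ v ∈ A, u ≠ v → mdist m u v = c) : setSep m A = c := by
  obtain ⟨a, ha, b, hb, hab⟩ := Finset.one_lt_card.1 hA
  exact le_antisymm (hc a ha b hb hab ▸ setSep_le_mdist m ha hb hab)
    (le_setSep m hA fun u hu v hv huv => (hc u hu v hv huv).ge)

variable {m}

lemma abs_setDiam_sub_le {m' : MetricSpace X} {s : ℝ} (hs : 0 ≤ s)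
    (h : ∀ u v, |mdist m u v - mdist m' u v| ≤ s) (A : Finset X) :
    |setDiam m A - setDiam m' A| ≤ s := by
  have key : ∀ m₁ m₂ : MetricSpace X, (∀ u v, mdist m₂ u v ≤ mdist m₁ u v + s) →
      setDiam m₂ A ≤ setDiam m₁ A + s := fun m₁ m₂ h₁₂ => by
    let _ := m₂
    refine Metric.diam_le_of_forall_dist_le
      (add_nonneg (by let _ := m₁; exact Metric.diam_nonneg) hs) fun u hu v hv =>
        (h₁₂ u v).trans (by gcongr; exact mdist_le_setDiam m₁ hu hv)
  rw [abs_sub_le_iff, sub_le_iff_le_add', sub_le_iff_le_add']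
  exact ⟨key m' m fun u v => by linarith [abs_le.1 (h u v)],
    key m m' fun u v => by linarith [abs_le.1 (h u v)]⟩

lemma abs_setSep_sub_le {m' : MetricSpace X} {s : ℝ}
    (h : ∀ u v, |mdist m u v - mdist m' u v| ≤ s) (hA : 1 < A.card) :
    |setSep m A - setSep m' A| ≤ s := by
  have key : ∀ m₁ m₂ : MetricSpace X, (∀ u v, mdist m₁ u v ≤ mdist m₂ u v + s) →
      setSep m₁ A - s ≤ setSep m₂ A := fun m₁ m₂ h₁₂ =>
    le_setSep m₂ hA fun u hu v hv huv =>
      sub_le_iff_le_add.2 ((setSep_le_mdist m₁ hu hv huv).trans (h₁₂ u v))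
  rw [abs_sub_le_iff, sub_le_comm, sub_le_comm (b := setSep m A)]
  exact ⟨key m m' fun u v => by linarith [abs_le.1 (h u v)],
    key m' m fun u v => by linarith [abs_le.1 (h u v)]⟩

end FiniteSets

theorem not_isDoublingMetric_of_forall_equilateral (m : MetricSpace X)
    (h : ∀ n : ℕ, ∃ A : Finset X, n < A.card ∧ IsEquilateral m A) :
    ¬IsDoublingMetric m := by
  rintro ⟨C, -, α, -, hdouble⟩
  obtain ⟨n, hn⟩ := exists_nat_gt C
  obtain ⟨A, hnA, c, hc⟩ := h (max n 1)
  have hA : 1 < A.card := (le_max_right n 1).trans_lt hnA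
  have hc₀ : 0 < c := setSep_eq_of_equilateral m hA hc ▸ setSep_pos m hA
  have hcard := hdouble A hA
  rw [setDiam_eq_of_equilateral m hA hc, setSep_eq_of_equilateral m hA hc, div_self hc₀.ne',
    Real.one_rpow, mul_one] at hcard
  have : (n : ℝ) < A.card := by exact_mod_cast (le_max_left n 1).trans_lt hnA
  linarith

theorem not_isDoublingMetric_iff (m : MetricSpace X) :
    ¬IsDoublingMetric m ↔ ∀ n : ℕ, ∃ A : Finset X, 2 ≤ A.card ∧
      ((n : ℝ) + 1) * (setDiam m A / setSep m A) ^ (n + 1) < A.card := by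
  refine ⟨fun h n => ?_, fun h => ?_⟩
  · by_contra! hn
    exact h ⟨n + 1, by positivity, n + 1, by positivity, fun A hA => by exact_mod_cast hn A hA⟩
  · rintro ⟨C, -, α, -, hdouble⟩
    obtain ⟨n, hn⟩ := exists_nat_ge (max C α)
    obtain ⟨A, hA, hcard⟩ := h n
    have hratio : 1 ≤ setDiam m A / setSep m A :=
      (one_le_div (setSep_pos m hA)).2 (setSep_le_setDiam m hA)
    have : C * (setDiam m A / setSep m A) ^ α ≤
        ((n : ℝ) + 1) * (setDiam m A / setSep m A) ^ (n + 1) := by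
      rw [← Real.rpow_natCast]
      refine mul_le_mul (by linarith [le_max_left C α])
        (Real.rpow_le_rpow_of_exponent_le hratio (by push_cast; linarith [le_max_right C α]))
        (by positivity) (by positivity)
    linarith [hdouble A hA]

namespace Met

variable [TopologicalSpace X]

theorem continuous_setDiam (A : Finset X) : Continuous fun d : Met X => setDiam d.1 A :=
  continuous_of_abs_sub_le fun _ _ _ hs h => abs_setDiam_sub_le hs h A

theorem continuous_setSep {A : Finset X} (hA : 1 < A.card) :
    Continuous fun d : Met X => setSep d.1 A :=
  continuous_of_abs_sub_le fun _ _ _ _ h => abs_setSep_sub_le h hA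

theorem isGδ_setOf_not_isDoublingMetric : IsGδ {d : Met X | ¬IsDoublingMetric d.1} := by
  simp_rw [not_isDoublingMetric_iff, Set.ofPred_forall, Set.ofPred_exists]
  refine .iInter fun n => IsOpen.isGδ <| isOpen_iUnion fun A => ?_
  by_cases hA : 2 ≤ A.card
  · simp only [hA, true_and]
    have hsep := continuous_setSep (X := X) hA
    exact isOpen_lt (continuous_const.mul (((continuous_setDiam A).div hsep
      fun d => (setSep_pos d.1 hA).ne').pow _)) continuous_const
  · simp [hA]

end Met

section Perturbation

variable [MetricSpace X]

noncomputable def tent (c : X) (h L : ℝ) (y : X) : ℝ := max (h - L * dist y c) 0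

section Tent

variable {c : X} {h L : ℝ}

lemma tent_nonneg (y : X) : 0 ≤ tent c h L y := le_max_right _ _

lemma tent_le (hh : 0 ≤ h) (hL : 0 ≤ L) (y : X) : tent c h L y ≤ h :=
  max_le (sub_le_self _ (mul_nonneg hL dist_nonneg)) hh

lemma tent_self (hh : 0 ≤ h) : tent c h L c = h := by simp [tent, hh]

lemma tent_eq_zero {y : X} (hy : h ≤ L * dist y c) : tent c h L y = 0 :=
  max_eq_right (sub_nonpos.2 hy)

lemma abs_tent_sub_le (hL : 0 ≤ L) (y z : X) :
    |tent c h L y - tent c h L z| ≤ L * dist y z := by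
  refine (abs_max_sub_max_le_abs _ _ _).trans ?_
  rw [sub_sub_sub_cancel_left, ← mul_sub, abs_mul, abs_of_nonneg hL, dist_comm y z]
  exact mul_le_mul_of_nonneg_left (abs_dist_sub_le z y c) hL

end Tent

def ConvergesFast (x : ℕ → X) (p : X) : Prop := ∀ k, 4 * dist (x (k + 1)) p < dist (x k) p

variable {p : X} {x : ℕ → X}

theorem exists_convergesFast (hp : (𝓝[≠] p).NeBot) {r : ℝ} (hr : 0 < r) :
    ∃ x : ℕ → X, dist (x 0) p < r ∧ ConvergesFast x p := by
  -- quantified over all `s` so that `choose` gives a total function, which can be iterated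
  have hnear : ∀ s : ℝ, ∃ y : X, 0 < s → 0 < dist y p ∧ dist y p < s := fun s => by
    by_cases hs : 0 < s
    · obtain ⟨y, hys, hyp⟩ := Metric.nhdsWithin_basis_ball.neBot_iff.1 hp hs
      exact ⟨y, fun _ => ⟨dist_pos.2 hyp, hys⟩⟩
    · exact ⟨p, fun h => absurd h hs⟩
  choose g hg using hnear
  set x : ℕ → X := fun k => (fun y => g (dist y p / 4))^[k] (g r)
  have hsucc : ∀ k, x (k + 1) = g (dist (x k) p / 4) := fun k =>
    Function.iterate_succ_apply' _ k _
  have hpos : ∀ k, 0 < dist (x k) p := fun k => by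
    induction k with
    | zero => exact (hg r hr).1
    | succ k ih => rw [hsucc]; exact (hg _ (div_pos ih four_pos)).1
  refine ⟨x, (hg r hr).2, fun k => ?_⟩
  rw [hsucc]
  linarith [(hg _ (div_pos (hpos k) four_pos)).2]

namespace ConvergesFast

variable (hx : ConvergesFast x p)
include hx

lemma dist_pos (k : ℕ) : 0 < dist (x k) p := by
  linarith [hx k, dist_nonneg (x := x (k + 1)) (y := p)]

lemma antitone_dist : Antitone fun k => dist (x k) p :=
  antitone_nat_of_succ_le fun k => by linarith [hx k, hx.dist_pos (k + 1)]

lemma four_mul_dist_lt {j k : ℕ} (hjk : j < k) : 4 * dist (x k) p < dist (x j) p := by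
  linarith [hx j, hx.antitone_dist (Nat.succ_le_of_lt hjk)]

lemma half_dist_le_dist {j k : ℕ} (hjk : j ≠ k) : dist (x k) p / 2 ≤ dist (x j) (x k) := by
  have hk := hx.dist_pos k
  rcases hjk.lt_or_gt with hjk | hkj
  · linarith [hx.four_mul_dist_lt hjk, dist_triangle (x j) (x k) p]
  · linarith [hx.four_mul_dist_lt hkj, dist_triangle (x k) (x j) p, dist_comm (x j) (x k)]

lemma injective : Function.Injective x := fun j k hjk => by
  by_contra hne
  have := hx.half_dist_le_dist hne
  rw [hjk, dist_self] at this
  linarith [hx.dist_pos k]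

lemma tendsto_dist : Tendsto (fun k => dist (x k) p) atTop (𝓝 0) := by
  have hbound : ∀ k, dist (x k) p ≤ dist (x 0) p * (1 / 4) ^ k := by
    intro k
    induction k with
    | zero => simp
    | succ k ih => rw [pow_succ, ← mul_assoc]; linarith [hx k]
  refine squeeze_zero (fun _ => dist_nonneg) hbound ?_
  simpa using (tendsto_pow_atTop_nhds_zero_of_lt_one (r := (1 / 4 : ℝ)) (by norm_num)
    (by norm_num)).const_mul (dist (x 0) p)

end ConvergesFast

-- Constant on each block `[n², n² + n)`, which makes the points of a block equidistant below.
noncomputable def bumpHeight (x : ℕ → X) (p : X) (k : ℕ) : ℝ :=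
  2 * dist (x (Nat.sqrt k * Nat.sqrt k)) p

noncomputable def bumpSlope (x : ℕ → X) (p : X) (k : ℕ) : ℝ :=
  2 * bumpHeight x p k / dist (x k) p

noncomputable def bump (x : ℕ → X) (p : X) (k : ℕ) : X → ℝ :=
  tent (x k) (bumpHeight x p k) (bumpSlope x p k)

lemma bumpHeight_nonneg (k : ℕ) : 0 ≤ bumpHeight x p k := by
  unfold bumpHeight; positivity

lemma bumpSlope_nonneg (k : ℕ) : 0 ≤ bumpSlope x p k := by
  unfold bumpSlope; have := bumpHeight_nonneg (x := x) (p := p) k; positivity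

lemma bumpHeight_block {n i : ℕ} (hi : i < n) :
    bumpHeight x p (n * n + i) = 2 * dist (x (n * n)) p := by
  rw [bumpHeight, Nat.sqrt_add_eq n (by omega)]

lemma bump_nonneg (k : ℕ) (y : X) : 0 ≤ bump x p k y := tent_nonneg y

lemma bump_le (k : ℕ) (y : X) : bump x p k y ≤ bumpHeight x p k :=
  tent_le (bumpHeight_nonneg k) (bumpSlope_nonneg k) y

lemma abs_bump_sub_le (k : ℕ) (y z : X) : |bump x p k y - bump x p k z| ≤ bumpHeight x p k :=
  abs_sub_le_of_nonneg_of_le (bump_nonneg k y) (bump_le k y) (bump_nonneg k z) (bump_le k z)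

lemma bump_self (k : ℕ) : bump x p k (x k) = bumpHeight x p k := tent_self (bumpHeight_nonneg k)

section ConvergesFast

variable (hx : ConvergesFast x p)
include hx

lemma bumpHeight_le (k : ℕ) : bumpHeight x p k ≤ 2 * dist (x 0) p := by
  unfold bumpHeight; linarith [hx.antitone_dist (Nat.zero_le (Nat.sqrt k * Nat.sqrt k))]

lemma tendsto_bumpHeight : Tendsto (bumpHeight x p) atTop (𝓝 0) := by
  have hsq : Tendsto (fun k => Nat.sqrt k * Nat.sqrt k) atTop atTop :=
    tendsto_atTop_atTop.2 fun b => ⟨b * b, fun k hk =>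
      (Nat.le_sqrt.2 hk).trans (Nat.le_mul_self _)⟩
  have := (hx.tendsto_dist.comp hsq).const_mul 2
  rwa [mul_zero] at this

lemma bump_eq_zero {j k : ℕ} (hjk : j ≠ k) : bump x p k (x j) = 0 := by
  refine tent_eq_zero ?_
  rw [bumpSlope, div_mul_eq_mul_div, le_div_iff₀ (hx.dist_pos k)]
  nlinarith [hx.half_dist_le_dist hjk, bumpHeight_nonneg (x := x) (p := p) k]

noncomputable def bumpMap (y : X) : ℕ →ᵇ ℝ :=
  BoundedContinuousFunction.mkOfDiscrete (fun k => bump x p k y) (2 * dist (x 0) p) fun k l =>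
    abs_sub_le_of_nonneg_of_le (bump_nonneg k y) ((bump_le k y).trans (bumpHeight_le hx k))
      (bump_nonneg l y) ((bump_le l y).trans (bumpHeight_le hx l))

lemma dist_bumpMap_le (y z : X) : dist (bumpMap hx y) (bumpMap hx z) ≤ 2 * dist (x 0) p :=
  (BoundedContinuousFunction.dist_le (by positivity)).2 fun k =>
    (abs_bump_sub_le k y z).trans (bumpHeight_le hx k)

lemma dist_bumpMap_le_of_bumpHeight_le {M : ℕ} {ε : ℝ} (hε : 0 ≤ ε)
    (hM : ∀ k ≥ M, bumpHeight x p k ≤ ε) (y z : X) :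
    dist (bumpMap hx y) (bumpMap hx z) ≤
      (∑ k ∈ Finset.range M, bumpSlope x p k) * dist y z + ε := by
  have hS₀ : 0 ≤ ∑ k ∈ Finset.range M, bumpSlope x p k :=
    Finset.sum_nonneg fun k _ => bumpSlope_nonneg k
  refine (BoundedContinuousFunction.dist_le
    (add_nonneg (mul_nonneg hS₀ dist_nonneg) hε)).2 fun k => ?_
  by_cases hk : k < M
  · have hS : bumpSlope x p k ≤ ∑ k ∈ Finset.range M, bumpSlope x p k :=
      Finset.single_le_sum (fun k _ => bumpSlope_nonneg k) (Finset.mem_range.2 hk)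
    calc |bump x p k y - bump x p k z| ≤ bumpSlope x p k * dist y z :=
          abs_tent_sub_le (bumpSlope_nonneg k) y z
      _ ≤ (∑ k ∈ Finset.range M, bumpSlope x p k) * dist y z + ε := by
          nlinarith [dist_nonneg (x := y) (y := z)]
  · exact (abs_bump_sub_le k y z).trans ((hM k (not_lt.1 hk)).trans
      (le_add_of_nonneg_left (mul_nonneg hS₀ dist_nonneg)))

lemma continuous_bumpMap : Continuous (bumpMap hx) := by
  refine Metric.continuous_iff.2 fun y ε hε => ?_
  obtain ⟨M, hM⟩ := eventually_atTop.1 <|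
    (tendsto_order.1 (tendsto_bumpHeight hx)).2 (ε / 2) (by positivity)
  set S := ∑ k ∈ Finset.range M, bumpSlope x p k
  have hS : 0 ≤ S := Finset.sum_nonneg fun k _ => bumpSlope_nonneg k
  refine ⟨ε / (2 * (S + 1)), div_pos hε (by linarith), fun z hz => ?_⟩
  have hSz : S * dist z y < ε / 2 := by
    calc S * dist z y ≤ S * (ε / (2 * (S + 1))) := by gcongr
      _ < ε / 2 := by
        rw [mul_div_assoc', div_lt_div_iff₀ (by positivity) two_pos]; nlinarith
  linarith [dist_bumpMap_le_of_bumpHeight_le hx (by positivity) (fun k hk => (hM k hk).le) z y]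

lemma dist_bumpMap_block {n i j : ℕ} (hi : i < n) (hj : j < n) (hij : i ≠ j) :
    dist (bumpMap hx (x (n * n + i))) (bumpMap hx (x (n * n + j))) =
      2 * dist (x (n * n)) p := by
  have hij' : n * n + i ≠ n * n + j := by omega
  have hc : 0 ≤ 2 * dist (x (n * n)) p := by positivity
  refine le_antisymm ((BoundedContinuousFunction.dist_le hc).2 fun k => ?_) ?_
  · change |bump x p k _ - bump x p k _| ≤ _
    by_cases hki : k = n * n + i
    · subst hki
      rw [bump_self, bump_eq_zero hx hij'.symm, sub_zero, abs_of_nonneg (bumpHeight_nonneg _),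
        bumpHeight_block hi]
    by_cases hkj : k = n * n + j
    · subst hkj
      rw [bump_self, bump_eq_zero hx hij', zero_sub, abs_neg,
        abs_of_nonneg (bumpHeight_nonneg _), bumpHeight_block hj]
    rw [bump_eq_zero hx (Ne.symm hki), bump_eq_zero hx (Ne.symm hkj), sub_zero, abs_zero]
    exact hc
  · have := BoundedContinuousFunction.dist_coe_le_dist (f := bumpMap hx (x (n * n + i)))
      (g := bumpMap hx (x (n * n + j))) (n * n + i)
    change |bump x p _ _ - bump x p _ _| ≤ _ at this
    rwa [bump_self, bump_eq_zero hx hij'.symm, sub_zero, abs_of_nonneg (bumpHeight_nonneg _),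
      bumpHeight_block hi] at this

noncomputable abbrev perturbedMetric : MetricSpace X :=
  MetricSpace.induced (fun y => (y, bumpMap hx y)) (fun _ _ h => congrArg Prod.fst h)
    inferInstance

lemma mdist_perturbedMetric (u v : X) :
    mdist (perturbedMetric hx) u v = max (dist u v) (dist (bumpMap hx u) (bumpMap hx v)) :=
  Prod.dist_eq

lemma perturbedMetric_mem_metricsOn : perturbedMetric hx ∈ MetricsOn X :=
  (isEmbedding_graph (continuous_bumpMap hx)).eq_induced.symm

lemma abs_dist_sub_mdist_perturbedMetric_le (u v : X) :
    |dist u v - mdist (perturbedMetric hx) u v| ≤ 2 * dist (x 0) p := by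
  rw [mdist_perturbedMetric, abs_sub_comm, abs_of_nonneg (sub_nonneg.2 (le_max_left _ _))]
  have := dist_bumpMap_le hx u v
  have := max_le (le_add_of_nonneg_right (dist_nonneg (x := bumpMap hx u) (y := bumpMap hx v)))
    (le_add_of_nonneg_left (dist_nonneg (x := u) (y := v)))
  linarith

lemma mdist_perturbedMetric_block {n i j : ℕ} (hi : i < n) (hj : j < n) (hij : i ≠ j) :
    mdist (perturbedMetric hx) (x (n * n + i)) (x (n * n + j)) = 2 * dist (x (n * n)) p := by
  rw [mdist_perturbedMetric, dist_bumpMap_block hx hi hj hij]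
  refine max_eq_right ?_
  have := hx.antitone_dist (Nat.le_add_right (n * n) i)
  have := hx.antitone_dist (Nat.le_add_right (n * n) j)
  linarith [dist_triangle_right (x (n * n + i)) (x (n * n + j)) p]

lemma not_isDoublingMetric_perturbedMetric : ¬IsDoublingMetric (perturbedMetric hx) := by
  classical
  refine not_isDoublingMetric_of_forall_equilateral _ fun n =>
    ⟨(Finset.range (n + 1)).image fun i => x ((n + 1) * (n + 1) + i), ?_, ?_⟩
  · rw [Finset.card_image_of_injective _ fun i j h => add_left_cancel (hx.injective h),
      Finset.card_range]
    exact Nat.lt_succ_self n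
  · refine ⟨2 * dist (x ((n + 1) * (n + 1))) p, ?_⟩
    simp only [Finset.mem_image, Finset.mem_range]
    rintro _ ⟨i, hi, rfl⟩ _ ⟨j, hj, rfl⟩ hxij
    exact mdist_perturbedMetric_block hx hi hj (by rintro rfl; exact hxij rfl)

end ConvergesFast

end Perturbation

namespace Met

variable [TopologicalSpace X]

theorem exists_not_isDoublingMetric_near (hX : ¬DiscreteTopology X) (d : Met X) {ε : ℝ≥0∞}
    (hε : 0 < ε) : ∃ e : Met X, metD d.1 e.1 < ε ∧ ¬IsDoublingMetric e.1 := by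
  obtain ⟨p, hp⟩ : ∃ p : X, (𝓝[≠] p).NeBot := by
    simpa [discreteTopology_iff_nhds_ne, ← neBot_iff] using hX
  obtain ⟨r, hr, hrε⟩ : ∃ r : ℝ, 0 < r ∧ ENNReal.ofReal r < ε := by
    obtain ⟨r, -, hr, hrε⟩ := ENNReal.lt_iff_exists_real_btwn.1 hε
    exact ⟨r, ENNReal.ofReal_pos.1 hr, hrε⟩
  obtain ⟨m, hm⟩ := d
  change m.toUniformSpace.toTopologicalSpace = _ at hm
  subst hm
  let _ := m
  obtain ⟨x, hx₀, hx⟩ := exists_convergesFast hp (half_pos hr)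
  refine ⟨⟨perturbedMetric hx, perturbedMetric_mem_metricsOn hx⟩,
    (metD_le_ofReal fun u v => ?_).trans_lt hrε, not_isDoublingMetric_perturbedMetric hx⟩
  exact (abs_dist_sub_mdist_perturbedMetric_le hx u v).trans (by linarith)

theorem dense_setOf_not_isDoublingMetric (hX : ¬DiscreteTopology X) :
    Dense {d : Met X | ¬IsDoublingMetric d.1} :=
  dense_iff_inter_open.2 fun U hU ⟨d, hd⟩ => by
    obtain ⟨ε, hε, hball⟩ := isOpen_iff.1 hU d hd
    obtain ⟨e, hde, he⟩ := exists_not_isDoublingMetric_near hX d hε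
    exact ⟨e, hball hde, he⟩

end Met

end

theorem non_doubling_dense_Gdelta_general (X : Type*) [TopologicalSpace X]
    (hX : ¬DiscreteTopology X) :
    Dense { d : Met X | ¬IsDoublingMetric d.1 } ∧
    IsGδ { d : Met X | ¬IsDoublingMetric d.1 } :=
  ⟨Met.dense_setOf_not_isDoublingMetric hX, Met.isGδ_setOf_not_isDoublingMetric⟩

theorem non_doubling_dense_Gdelta (X : Type*) [TopologicalSpace X]
    [TopologicalSpace.MetrizableSpace X] (hX : ¬DiscreteTopology X) :
    Dense { d : Met X | ¬IsDoublingMetric d.1 } ∧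
    IsGδ { d : Met X | ¬IsDoublingMetric d.1 } :=
  non_doubling_dense_Gdelta_general X hX
end
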